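/- Let n > m > 1 be real and for A > 0 define E_2^{nm}(A) = (nm/(n−m))·(1/2^5)·[ (2^{2+n}−1)(1+n)ζ(n+2)/(2A)^n − (2^{2+m}−1)(1+m)ζ(m+2)/(2A)^m ], and set A_c^{nm} = (1/2)·[ ((2^{2+n}−1)(1+n)ζ(n+2)) / ((2^{2+m}−1)(1+m)ζ(m+2)) ]^{1/(n−m)}. Then for all A > 0: E_2^{nm}(A) > 0 if A < A_c^{nm}, E_2^{nm}(A) = 0 if and only if A = A_c^{nm}, and E_2^{nm}(A) < 0 if A > A_c^{nm}. -/

import Mathlib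

open Real Filter

/-- The Riemann zeta function `ζ(s) = Σ_{j=1}^∞ j^{-s}` for real `s > 1`. -/
noncomputable def rzeta (s : ℝ) : ℝ := ∑' j : ℕ, ((j : ℝ) + 1) ^ (-s)

/-- The coefficient `E₂^{nm}(A)` of `ε²` in the expansion of the bipartite energy of the
1D Lennard-Jones model around the equidistant configuration. -/
noncomputable def E2 (n m A : ℝ) : ℝ :=
  (n * m / (n - m)) * (1 / 2 ^ 5) *
    ((2 ^ (2 + n) - 1) * (1 + n) * rzeta (n + 2) / (2 * A) ^ n -
      (2 ^ (2 + m) - 1) * (1 + m) * rzeta (m + 2) / (2 * A) ^ m)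

/-- The transition point `A_c^{nm}` of the 1D `(n,m)` Lennard-Jones model. -/
noncomputable def Ac (n m : ℝ) : ℝ :=
  (1 / 2) * (((2 ^ (2 + n) - 1) * (1 + n) * rzeta (n + 2)) /
      ((2 ^ (2 + m) - 1) * (1 + m) * rzeta (m + 2))) ^ (1 / (n - m))

/-!
With `C_p = ljCoeff p > 0` and after factoring out `C_m / (2A)^n`, `E₂^{nm}(A)` is a positive
multiple of `C_n / C_m - (2A)^{n-m}`, where `C_n / C_m = (2 A_c)^{n-m}`. Since `t ↦ t^{n-m}` is
strictly increasing on `[0, ∞)`, the sign of `E₂^{nm}(A)` is that of `A_c - A`.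
-/

lemma rzeta_pos {s : ℝ} (hs : 1 < s) : 0 < rzeta s := by
  have hsum : Summable fun j : ℕ => ((j : ℝ) + 1) ^ (-s) := by
    exact_mod_cast (summable_nat_add_iff 1).2 (Real.summable_nat_rpow.2 (neg_lt_neg hs))
  exact hsum.tsum_pos (fun j => by positivity) 0 (by positivity)

/-- The constant multiplying `(2A)^{-p}` in `E2`; `Ac` is built from the same constants. -/
noncomputable def ljCoeff (p : ℝ) : ℝ := (2 ^ (2 + p) - 1) * (1 + p) * rzeta (p + 2)

lemma ljCoeff_pos {p : ℝ} (hp : -1 < p) : 0 < ljCoeff p := by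
  have h2 : 1 < (2 : ℝ) ^ (2 + p) := Real.one_lt_rpow one_lt_two (by linarith)
  exact mul_pos (mul_pos (by linarith) (by linarith)) (rzeta_pos (by linarith))

lemma sign_rpow_sub_rpow {x y r : ℝ} (hx : 0 ≤ x) (hy : 0 ≤ y) (hr : 0 < r) :
    SignType.sign (x ^ r - y ^ r) = SignType.sign (x - y) := by
  rcases lt_trichotomy x y with h | rfl | h
  · rw [sign_neg (sub_neg.2 h), sign_neg (sub_neg.2 (Real.rpow_lt_rpow hx h hr))]
  · simp
  · rw [sign_pos (sub_pos.2 h), sign_pos (sub_pos.2 (Real.rpow_lt_rpow hy h hr))]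

lemma sign_div_rpow_sub_div_rpow {a b x p q : ℝ} (ha : 0 ≤ a) (hb : 0 < b) (hx : 0 < x)
    (hqp : q < p) :
    SignType.sign (a / x ^ p - b / x ^ q) = SignType.sign ((a / b) ^ (1 / (p - q)) - x) := by
  have hpq : p - q ≠ 0 := (sub_pos.2 hqp).ne'
  have hfactor : a / x ^ p - b / x ^ q = b / x ^ p * (a / b - x ^ (p - q)) := by
    rw [Real.rpow_sub hx]
    field_simp
  have hroot : a / b = ((a / b) ^ (1 / (p - q))) ^ (p - q) := by
    rw [one_div, Real.rpow_inv_rpow (by positivity) hpq]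
  rw [hfactor, sign_mul, sign_pos (by positivity), one_mul, hroot,
    sign_rpow_sub_rpow (by positivity) hx.le (sub_pos.2 hqp), ← hroot]

lemma sign_E2_eq_sign_Ac_sub {n m A : ℝ} (hm : 1 < m) (hnm : m < n) (hA : 0 < A) :
    SignType.sign (E2 n m A) = SignType.sign (Ac n m - A) := by
  have hprefactor : 0 < n * m / (n - m) * (1 / 2 ^ 5) := by
    have : 0 < n - m := sub_pos.2 hnm
    have : 0 < n * m := by nlinarith
    positivity
  have hscale : (ljCoeff n / ljCoeff m) ^ (1 / (n - m)) - 2 * A = 2 * (Ac n m - A) := by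
    rw [Ac]; unfold ljCoeff; ring
  change SignType.sign (n * m / (n - m) * (1 / 2 ^ 5) *
    (ljCoeff n / (2 * A) ^ n - ljCoeff m / (2 * A) ^ m)) = _
  rw [sign_mul, sign_pos hprefactor, one_mul,
    sign_div_rpow_sub_div_rpow (ljCoeff_pos (by linarith)).le (ljCoeff_pos (by linarith))
      (by positivity) hnm, hscale, sign_mul, sign_pos two_pos, one_mul]

/-- For `n > m > 1` and all `A > 0`: `E₂^{nm}(A) > 0` if `A < A_c^{nm}`,
`E₂^{nm}(A) = 0` iff `A = A_c^{nm}`, and `E₂^{nm}(A) < 0` if `A > A_c^{nm}`. -/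
theorem E2_sign_change_at_transition_point
    (n m : ℝ) (hm : 1 < m) (hnm : m < n) :
    ∀ A : ℝ, 0 < A →
      (A < Ac n m → 0 < E2 n m A) ∧
      (E2 n m A = 0 ↔ A = Ac n m) ∧
      (Ac n m < A → E2 n m A < 0) := by
  intro A hA
  have hsign := sign_E2_eq_sign_Ac_sub hm hnm hA
  refine ⟨fun h => ?_, ?_, fun h => ?_⟩
  · rw [← sign_eq_one_iff, hsign, sign_eq_one_iff, sub_pos]
    exact h
  · rw [← _root_.sign_eq_zero_iff, hsign, _root_.sign_eq_zero_iff, sub_eq_zero, eq_comm]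
  · rw [← sign_eq_neg_one_iff, hsign, sign_eq_neg_one_iff, sub_neg]
    exact h
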